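/- Let q ≥ 1, let a₂ > a₃ > 0 be real numbers, let λ : Fin q → ℝ with λ i ≠ 0 for every i, and let γ : Fin q → ℝ. Then the function f : ℝ^q → ℝ defined by f(x) = Σᵢ γᵢ xᵢ + a₂ Σᵢ λᵢ² xᵢ² + a₃ Σ_{i≠j} λᵢ λⱼ xᵢ xⱼ is strictly convex on ℝ^q. -/
import Mathlib


open Finset

private lemma offdiag_identity (q : ℕ) (lam x : Fin q → ℝ) :
    (∑ i, ∑ j, if i ≠ j then lam i * lam j * x i * x j else 0)
      = (∑ i, lam i * x i) ^ 2 - ∑ i, (lam i) ^ 2 * (x i) ^ 2 := by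
  have h1 : (∑ i, lam i * x i) ^ 2
      = ∑ i, ∑ j, (lam i * x i) * (lam j * x j) := by
    rw [sq, Finset.sum_mul_sum]
  have h2 : ∀ i j : Fin q,
      (if i ≠ j then lam i * lam j * x i * x j else 0)
        = (lam i * x i) * (lam j * x j)
          - (if i = j then (lam j) ^ 2 * (x j) ^ 2 else 0) := by
    intro i j
    by_cases h : i = j
    · subst h; simp; ring
    · simp [h]; ring
  simp only [h2, Finset.sum_sub_distrib]
  rw [h1]
  congr 1
  apply Finset.sum_congr rfl
  intro i _
  rw [Finset.sum_ite_eq Finset.univ i (fun j => (lam j) ^ 2 * (x j) ^ 2)]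
  simp

private lemma convexOn_lin_plus_sq (q : ℕ) (a₃ : ℝ) (ha₃ : 0 < a₃)
    (lam γ : Fin q → ℝ) :
    ConvexOn ℝ (Set.univ : Set (Fin q → ℝ))
      (fun x : Fin q → ℝ => (∑ i, γ i * x i) + a₃ * (∑ i, lam i * x i) ^ 2) := by
  refine ⟨convex_univ, ?_⟩
  intro x _ y _ a b ha hb hab
  simp only [Pi.add_apply, Pi.smul_apply, smul_eq_mul]
  have hL : ∀ (c : Fin q → ℝ), ∑ i, c i * (a * x i + b * y i)
      = a * (∑ i, c i * x i) + b * (∑ i, c i * y i) := by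
    intro c
    rw [Finset.mul_sum, Finset.mul_sum, ← Finset.sum_add_distrib]
    apply Finset.sum_congr rfl
    intro i _; ring
  rw [hL γ, hL lam]
  have key : (a * (∑ i, lam i * x i) + b * (∑ i, lam i * y i)) ^ 2
      ≤ a * (∑ i, lam i * x i) ^ 2 + b * (∑ i, lam i * y i) ^ 2 := by
    nlinarith [sq_nonneg ((∑ i, lam i * x i) - (∑ i, lam i * y i)), mul_nonneg ha hb]
  have key2 := mul_le_mul_of_nonneg_left key ha₃.le
  nlinarith [key2]

private lemma strictConvexOn_wsq (q : ℕ) (c : Fin q → ℝ) (hc : ∀ i, 0 < c i) :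
    StrictConvexOn ℝ (Set.univ : Set (Fin q → ℝ))
      (fun x : Fin q → ℝ => ∑ i, c i * (x i) ^ 2) := by
  refine ⟨convex_univ, ?_⟩
  intro x _ y _ hxy a b ha hb hab
  simp only [Pi.add_apply, Pi.smul_apply, smul_eq_mul]
  rw [Finset.mul_sum, Finset.mul_sum, ← Finset.sum_add_distrib]
  obtain ⟨i₀, hi₀⟩ := Function.ne_iff.mp hxy
  apply Finset.sum_lt_sum
  · intro i _
    have base : (a * x i + b * y i) ^ 2 ≤ a * (x i) ^ 2 + b * (y i) ^ 2 := by
      nlinarith [sq_nonneg (x i - y i), mul_pos ha hb]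
    have := mul_le_mul_of_nonneg_left base (hc i).le
    nlinarith [this]
  · refine ⟨i₀, Finset.mem_univ _, ?_⟩
    have hne : x i₀ - y i₀ ≠ 0 := sub_ne_zero.mpr hi₀
    have h1 : 0 < (x i₀ - y i₀) ^ 2 := by positivity
    have base : (a * x i₀ + b * y i₀) ^ 2 < a * (x i₀) ^ 2 + b * (y i₀) ^ 2 := by
      nlinarith [mul_pos (mul_pos ha hb) h1]
    have := mul_lt_mul_of_pos_left base (hc i₀)
    nlinarith [this]

/-- Lemma 1 of the paper: the quantization-error cost
`f(x) = Σᵢ γᵢ xᵢ + a₂ Σᵢ λᵢ² xᵢ² + a₃ Σ_{i≠j} λᵢ λⱼ xᵢ xⱼ`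
is strictly convex on `ℝ^q` whenever `a₂ > a₃ > 0` and all `λᵢ ≠ 0`. -/
theorem strictConvexOn_quantization_cost
    (q : ℕ) (hq : 1 ≤ q) (a₂ a₃ : ℝ) (ha₃ : 0 < a₃) (ha : a₃ < a₂)
    (lam : Fin q → ℝ) (hlam : ∀ i, lam i ≠ 0) (γ : Fin q → ℝ) :
    StrictConvexOn ℝ (Set.univ : Set (Fin q → ℝ))
      (fun x : Fin q → ℝ =>
        (∑ i, γ i * x i) + a₂ * ∑ i, (lam i) ^ 2 * (x i) ^ 2 +
          a₃ * ∑ i, ∑ j, if i ≠ j then lam i * lam j * x i * x j else 0) := by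
  have heq : (fun x : Fin q → ℝ =>
        (∑ i, γ i * x i) + a₂ * ∑ i, (lam i) ^ 2 * (x i) ^ 2 +
          a₃ * ∑ i, ∑ j, if i ≠ j then lam i * lam j * x i * x j else 0)
      = (fun x : Fin q → ℝ =>
          ((∑ i, γ i * x i) + a₃ * (∑ i, lam i * x i) ^ 2)
            + ∑ i, ((a₂ - a₃) * (lam i) ^ 2) * (x i) ^ 2) := by
    funext x
    have h3 : ∑ i, (a₂ - a₃) * (lam i) ^ 2 * (x i) ^ 2
        = (a₂ - a₃) * ∑ i, (lam i) ^ 2 * (x i) ^ 2 := by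
      rw [Finset.mul_sum]
      exact Finset.sum_congr rfl (fun i _ => by ring)
    rw [offdiag_identity q lam x, h3]
    ring
  rw [heq]
  exact (convexOn_lin_plus_sq q a₃ ha₃ lam γ).add_strictConvexOn
    (strictConvexOn_wsq q _ (fun i => by
      have := hlam i
      have : 0 < (lam i) ^ 2 := by positivity
      nlinarith))
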